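/- Let G be a simple graph on n vertices with m edges and maximum subgraph spectral density t = t(G). If k ≥ 2·m^{1/3}/(1−t)^{2/3} or m ≥ (2n)^{3/2}/(1−t), then BC_k(G) holds. -/

import Mathlib

open Finset

namespace Brouwer

variable {V : Type*}

/-- The sum of the `k` largest values of `f` on a finite type, expressed as the
supremum over all `k`-element subsets of the sum of `f` over the subset. -/
noncomputable def sumKLargest [Fintype V] (f : V → ℝ) (k : ℕ) : ℝ :=
  sSup { x : ℝ | ∃ T : Finset V, T.card = k ∧ ∑ i ∈ T, f i = x }

/-- The Laplacian matrix of a finite simple graph is Hermitian (real symmetric). -/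
theorem lapMatrix_isHermitian [Fintype V] [DecidableEq V] (G : SimpleGraph V)
    [DecidableRel G.Adj] : (G.lapMatrix ℝ).IsHermitian := by
  rw [Matrix.IsHermitian, Matrix.conjTranspose_eq_transpose_of_trivial]
  exact G.isSymm_lapMatrix ℝ

/-- The adjacency matrix of a finite simple graph is Hermitian (real symmetric). -/
theorem adjMatrix_isHermitian [Fintype V] [DecidableEq V] (G : SimpleGraph V)
    [DecidableRel G.Adj] : (G.adjMatrix ℝ).IsHermitian := by
  rw [Matrix.IsHermitian, Matrix.conjTranspose_eq_transpose_of_trivial]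
  exact G.isSymm_adjMatrix

/-- The (multiset of) eigenvalues of the Laplacian matrix of `G`, indexed by vertices. -/
noncomputable def lapEig [Fintype V] [DecidableEq V] (G : SimpleGraph V) : V → ℝ := by
  classical exact (lapMatrix_isHermitian G).eigenvalues

/-- The (multiset of) eigenvalues of the adjacency matrix of `G`, indexed by vertices. -/
noncomputable def adjEig [Fintype V] [DecidableEq V] (G : SimpleGraph V) : V → ℝ := by
  classical exact (adjMatrix_isHermitian G).eigenvalues

/-- `sLap G k` is `s_k(G)`, the sum of the `k` largest Laplacian eigenvalues of `G`. -/
noncomputable def sLap [Fintype V] [DecidableEq V] (G : SimpleGraph V) (k : ℕ) : ℝ :=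
  sumKLargest (lapEig G) k

/-- The number of edges of `G`. -/
noncomputable def numEdges [Fintype V] (G : SimpleGraph V) : ℕ := by
  classical exact G.edgeFinset.card

/-- `BC G k`: Brouwer's conjectured inequality `s_k(G) ≤ m + (k+1 choose 2)`. -/
def BC [Fintype V] [DecidableEq V] (G : SimpleGraph V) (k : ℕ) : Prop :=
  sLap G k ≤ numEdges G + (k + 1).choose 2

/-- Number of edges of `G` with both endpoints in `S`. -/
noncomputable def edgesWithin [Fintype V] [DecidableEq V] (G : SimpleGraph V)
    (S : Finset V) : ℕ := by
  classical exact (G.edgeFinset.filter (fun e => ∀ v ∈ e, v ∈ S)).card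

/-- The adjacency spectral radius of `G`, i.e. the largest adjacency eigenvalue. -/
noncomputable def specRad [Fintype V] [DecidableEq V] (G : SimpleGraph V) : ℝ :=
  sumKLargest (adjEig G) 1

/-- The maximum subgraph spectral density `t(G)`:
the supremum of `ρ(G[S])/|S|` over nonempty vertex subsets `S`. -/
noncomputable def maxDensity [Fintype V] [DecidableEq V] (G : SimpleGraph V) : ℝ :=
  sSup { x : ℝ | ∃ S : Finset V, S.Nonempty ∧
    x = specRad (G.induce (↑S : Set V)) / (S.card : ℝ) }

/-- Edge-edit distance between two graphs on the same vertex set. -/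
noncomputable def editDistance [Fintype V] (G H : SimpleGraph V) : ℕ := by
  classical exact (symmDiff G.edgeFinset H.edgeFinset).card

/-- A split graph: the vertex set partitions into a clique and an independent set. -/
def IsSplit (G : SimpleGraph V) : Prop :=
  ∃ C : Set V, G.IsClique C ∧ Gᶜ.IsClique Cᶜ

/-- The splittance of `G`: the least number of edge edits needed to reach a split graph. -/
noncomputable def splittance [Fintype V] (G : SimpleGraph V) : ℕ :=
  sInf { d : ℕ | ∃ H : SimpleGraph V, IsSplit H ∧ editDistance G H = d }

/-- The join `G + K₁` of `G` with one new vertex adjacent to every vertex of `G`. -/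
def joinOne (G : SimpleGraph V) : SimpleGraph (Option V) where
  Adj x y := x ≠ y ∧ ∀ a, x = some a → ∀ b, y = some b → G.Adj a b
  symm := by
    constructor
    rintro x y ⟨hxy, h⟩
    exact ⟨hxy.symm, fun a ha b hb => (h b hb a ha).symm⟩
  loopless := by constructor; rintro x ⟨hxx, -⟩; exact hxx rfl

/-! Take orthonormal Laplacian eigenvectors `x_i`, `i ∈ T`, `|T| = k`, and let `P = ∑ x_i x_iᵀ`
be the projection onto their span, so that `s_k(G) = ⟨L, P⟩`, `0 ≤ P_uu ≤ 1`, `tr P = k` and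
`‖P‖_F² = k`. Split `L = D - A`. The degree part `∑ d_u P_uu` is at most the degree sum of some
`k`-set `S`, which is `m + e(G[S]) - e(G[V ∖ S]) ≤ m + ρ(G[S]) k / 2 ≤ m + t k² / 2`. By
Cauchy–Schwarz the adjacency part is `-⟨A, P⟩ ≤ ‖A‖_F ‖P‖_F = √(2mk)`. Hence
`s_k ≤ m + t k² / 2 + √(2mk) ≤ m + k² / 2` as soon as `8m ≤ k³ (1 - t)²`, which is the first
condition. Otherwise the second condition forces `kn ≤ m`, and `s_k ≤ kn` because every Laplacian
eigenvalue is at most `n`. -/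

section Orthonormal

open Matrix

variable {ι : Type*} [Fintype V]

def projMatrix (x : ι → V → ℝ) (T : Finset ι) : Matrix V V ℝ :=
  Matrix.of fun u v => ∑ i ∈ T, x i u * x i v

lemma sum_dotProduct_mulVec_eq_sum_mul_projMatrix (M : Matrix V V ℝ) (x : ι → V → ℝ)
    (T : Finset ι) :
    ∑ i ∈ T, x i ⬝ᵥ (M *ᵥ x i) = ∑ u, ∑ v, M u v * projMatrix x T u v := by
  simp only [dotProduct, mulVec, projMatrix, of_apply, Finset.mul_sum]
  rw [Finset.sum_comm]
  refine Finset.sum_congr rfl fun u _ => ?_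
  rw [Finset.sum_comm]
  exact Finset.sum_congr rfl fun v _ => Finset.sum_congr rfl fun i _ => by ring

omit [Fintype V] in
lemma projMatrix_apply_self_nonneg (x : ι → V → ℝ) (T : Finset ι) (u : V) :
    0 ≤ projMatrix x T u u :=
  Finset.sum_nonneg fun _ _ => mul_self_nonneg _

variable [DecidableEq ι]

def IsOrthonormalOn (x : ι → V → ℝ) (T : Finset ι) : Prop :=
  ∀ i ∈ T, ∀ j ∈ T, x i ⬝ᵥ x j = if i = j then 1 else 0

variable {x : ι → V → ℝ} {T : Finset ι}

lemma projMatrix_mul_self (hx : IsOrthonormalOn x T) :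
    projMatrix x T * projMatrix x T = projMatrix x T := by
  ext u w
  have hdiag : ∀ i ∈ T, ∑ j ∈ T, x i u * x j w * (x i ⬝ᵥ x j) = x i u * x i w := fun i hi => by
    rw [Finset.sum_congr rfl fun j hj => by rw [hx i hi j hj]]
    simp [hi]
  calc (projMatrix x T * projMatrix x T) u w
      = ∑ i ∈ T, ∑ j ∈ T, x i u * x j w * (x i ⬝ᵥ x j) := by
        simp only [projMatrix, mul_apply, of_apply, dotProduct, Finset.sum_mul, Finset.mul_sum]
        rw [Finset.sum_comm]
        conv_rhs => rw [Finset.sum_comm]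
        refine Finset.sum_congr rfl fun j _ => ?_
        rw [Finset.sum_comm]
        exact Finset.sum_congr rfl fun i _ => Finset.sum_congr rfl fun v _ => by ring
    _ = projMatrix x T u w := Finset.sum_congr rfl hdiag

lemma sum_projMatrix_apply_self (hx : IsOrthonormalOn x T) :
    ∑ u, projMatrix x T u u = T.card := by
  calc ∑ u, projMatrix x T u u = ∑ i ∈ T, x i ⬝ᵥ x i := by
        simp only [projMatrix, of_apply, dotProduct]
        exact Finset.sum_comm
    _ = T.card := by simp +contextual [hx _ _ _ _]

lemma sum_sq_projMatrix_row (hx : IsOrthonormalOn x T) (u : V) :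
    ∑ v, projMatrix x T u v ^ 2 = projMatrix x T u u := by
  conv_rhs => rw [← projMatrix_mul_self hx]
  simp only [mul_apply, sq]
  refine Finset.sum_congr rfl fun v _ => ?_
  congr 1
  simp only [projMatrix, of_apply, mul_comm]

lemma projMatrix_apply_self_le_one (hx : IsOrthonormalOn x T) (u : V) :
    projMatrix x T u u ≤ 1 := by
  have h : projMatrix x T u u ^ 2 ≤ projMatrix x T u u :=
    sum_sq_projMatrix_row hx u ▸ Finset.single_le_sum (f := fun v => projMatrix x T u v ^ 2)
      (fun _ _ => sq_nonneg _) (Finset.mem_univ u)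
  nlinarith [projMatrix_apply_self_nonneg x T u]

lemma sum_sum_sq_projMatrix (hx : IsOrthonormalOn x T) :
    ∑ u, ∑ v, projMatrix x T u v ^ 2 = T.card := by
  simp only [sum_sq_projMatrix_row hx, sum_projMatrix_apply_self hx]

lemma abs_sum_dotProduct_mulVec_le (hx : IsOrthonormalOn x T) (M : Matrix V V ℝ) :
    |∑ i ∈ T, x i ⬝ᵥ (M *ᵥ x i)| ≤ √(T.card * ∑ u, ∑ v, M u v ^ 2) := by
  rw [sum_dotProduct_mulVec_eq_sum_mul_projMatrix, ← Real.sqrt_sq_eq_abs]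
  refine Real.sqrt_le_sqrt ?_
  simp only [← Fintype.sum_prod_type']
  rw [← sum_sum_sq_projMatrix hx,
    ← Fintype.sum_prod_type' (f := fun u v => projMatrix x T u v ^ 2), mul_comm]
  exact Finset.sum_mul_sq_le_sq_mul_sq _ _ _

end Orthonormal

section SumKLargest

variable [Fintype V]

lemma bddAbove_sum_card_eq (f : V → ℝ) (k : ℕ) :
    BddAbove { x : ℝ | ∃ T : Finset V, T.card = k ∧ ∑ i ∈ T, f i = x } :=
  ((Set.finite_range fun T : Finset V => ∑ i ∈ T, f i).subset
    (by rintro x ⟨T, -, rfl⟩; exact ⟨T, rfl⟩)).bddAbove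

lemma sum_le_sumKLargest (f : V → ℝ) {T : Finset V} {k : ℕ} (hT : T.card = k) :
    ∑ i ∈ T, f i ≤ sumKLargest f k :=
  le_csSup (bddAbove_sum_card_eq f k) ⟨T, hT, rfl⟩

lemma sumKLargest_le (f : V → ℝ) {k : ℕ} (hk : k ≤ Fintype.card V) {B : ℝ}
    (h : ∀ T : Finset V, T.card = k → ∑ i ∈ T, f i ≤ B) : sumKLargest f k ≤ B := by
  obtain ⟨T, -, hT⟩ := Finset.exists_subset_card_eq (s := Finset.univ) (by simpa using hk)
  refine csSup_le ⟨_, T, hT, rfl⟩ ?_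
  rintro x ⟨T', hT', rfl⟩
  exact h T' hT'

lemma exists_card_eq_threshold (f : V → ℝ) {k : ℕ} (hk0 : 0 < k) (hk : k ≤ Fintype.card V) :
    ∃ S : Finset V, S.card = k ∧ ∃ θ, (∀ u ∈ S, θ ≤ f u) ∧ ∀ u ∉ S, f u ≤ θ := by
  classical
  obtain ⟨S, hS, hmax⟩ := Finset.exists_max_image (Finset.univ.powersetCard k)
    (fun S => ∑ u ∈ S, f u) (Finset.powersetCard_nonempty.mpr (by simpa using hk))
  have hScard : S.card = k := (Finset.mem_powersetCard.mp hS).2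
  obtain ⟨v₀, hv₀S, hv₀min⟩ := Finset.exists_min_image S f (Finset.card_pos.mp (hScard ▸ hk0))
  refine ⟨S, hScard, f v₀, hv₀min, fun u hu => ?_⟩
  by_contra! hgt
  have hu' : u ∉ S.erase v₀ := fun h => hu (Finset.mem_of_mem_erase h)
  have hswap := hmax (insert u (S.erase v₀)) <| Finset.mem_powersetCard.mpr
    ⟨Finset.subset_univ _, by
      rw [Finset.card_insert_of_notMem hu', Finset.card_erase_add_one hv₀S, hScard]⟩
  rw [Finset.sum_insert hu', Finset.sum_erase_eq_sub hv₀S] at hswap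
  linarith

lemma exists_card_eq_sum_mul_le (f c : V → ℝ) {k : ℕ} (hc0 : ∀ u, 0 ≤ c u)
    (hc1 : ∀ u, c u ≤ 1) (hcs : ∑ u, c u = k) :
    ∃ S : Finset V, S.card = k ∧ ∑ u, f u * c u ≤ ∑ u ∈ S, f u := by
  classical
  rcases Nat.eq_zero_or_pos k with rfl | hk0
  · have hc : ∀ u, c u = 0 := fun u =>
      (Finset.sum_eq_zero_iff_of_nonneg fun u _ => hc0 u).mp (by simpa using hcs) u
        (Finset.mem_univ u)
    exact ⟨∅, rfl, by simp [hc]⟩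
  have hk : k ≤ Fintype.card V := by
    have := Finset.sum_le_sum fun u (_ : u ∈ Finset.univ) => hc1 u
    rw [hcs, Finset.sum_const, nsmul_one, Finset.card_univ] at this
    exact_mod_cast this
  obtain ⟨S, hS, θ, hin, hout⟩ := exists_card_eq_threshold f hk0 hk
  refine ⟨S, hS, ?_⟩
  have hmass : ∑ u ∈ S, (c u - 1) + ∑ u ∈ Sᶜ, c u = 0 := by
    rw [Finset.sum_sub_distrib, Finset.sum_const, hS, nsmul_one, sub_add_eq_add_sub,
      Finset.sum_add_sum_compl, hcs, sub_self]
  calc ∑ u, f u * c u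
      = ∑ u ∈ S, f u + (∑ u ∈ S, f u * (c u - 1) + ∑ u ∈ Sᶜ, f u * c u) := by
        rw [← Finset.sum_add_sum_compl S, ← add_assoc, ← Finset.sum_add_distrib]
        simp only [mul_sub, mul_one, add_sub_cancel]
    _ ≤ ∑ u ∈ S, f u + (∑ u ∈ S, θ * (c u - 1) + ∑ u ∈ Sᶜ, θ * c u) := by
        refine add_le_add le_rfl (add_le_add (Finset.sum_le_sum fun u hu => ?_)
          (Finset.sum_le_sum fun u hu => ?_))
        · exact mul_le_mul_of_nonpos_right (hin u hu) (sub_nonpos.mpr (hc1 u))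
        · exact mul_le_mul_of_nonneg_right (hout u (Finset.mem_compl.mp hu)) (hc0 u)
    _ = ∑ u ∈ S, f u := by rw [← Finset.mul_sum, ← Finset.mul_sum, ← mul_add, hmass, mul_zero,
        add_zero]

end SumKLargest

section Hermitian

open Matrix

variable [Fintype V] [DecidableEq V] {M : Matrix V V ℝ} (hM : M.IsHermitian)
include hM

lemma _root_.Matrix.IsHermitian.isOrthonormalOn_eigenvectorBasis (T : Finset V) :
    IsOrthonormalOn (fun i => ⇑(hM.eigenvectorBasis i)) T := by
  intro i _ j _
  have h := orthonormal_iff_ite.mp hM.eigenvectorBasis.orthonormal j i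
  rw [EuclideanSpace.inner_eq_star_dotProduct] at h
  simpa [eq_comm] using h

lemma _root_.Matrix.IsHermitian.eigenvalues_eq_dotProduct (i : V) :
    hM.eigenvalues i = ⇑(hM.eigenvectorBasis i) ⬝ᵥ (M *ᵥ ⇑(hM.eigenvectorBasis i)) := by
  simpa using hM.eigenvalues_eq i

lemma _root_.Matrix.IsHermitian.dotProduct_mulVec_le {c : ℝ} (hc : ∀ i, hM.eigenvalues i ≤ c)
    (x : V → ℝ) : x ⬝ᵥ (M *ᵥ x) ≤ c * (x ⬝ᵥ x) := by
  set U : Matrix V V ℝ := ↑hM.eigenvectorUnitary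
  have hU : Uᵀ * U = 1 := by
    simpa [U, star_eq_conjTranspose] using Unitary.coe_star_mul_self hM.eigenvectorUnitary
  have hM' : M = U * diagonal hM.eigenvalues * Uᵀ := by
    conv_lhs => rw [hM.spectral_theorem]
    simp [U, star_eq_conjTranspose]
  set y := Uᵀ *ᵥ x
  have hquad : x ⬝ᵥ (M *ᵥ x) = ∑ i, hM.eigenvalues i * y i ^ 2 := by
    conv_lhs =>
      rw [hM', ← mulVec_mulVec, ← mulVec_mulVec, dotProduct_mulVec, ← mulVec_transpose]
    simp only [dotProduct, mulVec_diagonal, y, sq]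
    exact Finset.sum_congr rfl fun i _ => by ring
  have hnorm : ∑ i, y i ^ 2 = x ⬝ᵥ x := by
    calc ∑ i, y i ^ 2 = y ⬝ᵥ (Uᵀ *ᵥ x) := by simp only [dotProduct, sq, y]
      _ = x ⬝ᵥ x := by
        rw [dotProduct_mulVec, vecMul_transpose, mulVec_mulVec, mul_eq_one_comm.mp hU,
          one_mulVec]
  rw [hquad, ← hnorm, Finset.mul_sum]
  exact Finset.sum_le_sum fun i _ => mul_le_mul_of_nonneg_right (hc i) (sq_nonneg _)

lemma _root_.Matrix.IsHermitian.abs_eigenvalues_le (i : V) :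
    |hM.eigenvalues i| ≤ √(∑ u, ∑ v, M u v ^ 2) := by
  simpa [← hM.eigenvalues_eq_dotProduct] using
    abs_sum_dotProduct_mulVec_le (hM.isOrthonormalOn_eigenvectorBasis {i}) M

lemma _root_.Matrix.IsHermitian.sumKLargest_eigenvalues_le {k : ℕ} (hk : k ≤ Fintype.card V)
    {B : ℝ} (h : ∀ (x : V → V → ℝ) (T : Finset V), IsOrthonormalOn x T → T.card = k →
      ∑ i ∈ T, x i ⬝ᵥ (M *ᵥ x i) ≤ B) :
    sumKLargest hM.eigenvalues k ≤ B :=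
  sumKLargest_le _ hk fun T hT => by
    simpa only [hM.eigenvalues_eq_dotProduct] using
      h _ T (hM.isOrthonormalOn_eigenvectorBasis T) hT

end Hermitian

lemma two_mul_rpow_div_rpow_le_iff {a b x : ℝ} (ha : 0 ≤ a) (hb : 0 < b) (hx : 0 ≤ x) :
    2 * a ^ ((1 : ℝ) / 3) / b ^ ((2 : ℝ) / 3) ≤ x ↔ 8 * a ≤ x ^ 3 * b ^ 2 := by
  have hcube : ∀ {y : ℝ} (r : ℝ), 0 ≤ y → (y ^ (r / 3)) ^ 3 = y ^ r := fun r hy => by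
    rw [← Real.rpow_natCast, ← Real.rpow_mul hy]
    norm_num
  rw [div_le_iff₀ (by positivity), ← pow_le_pow_iff_left₀ (by positivity) (by positivity)
    (three_ne_zero), mul_pow, mul_pow, hcube 1 ha, hcube 2 hb.le, Real.rpow_one]
  norm_num

lemma pow_three_le_of_rpow_div_le {a b y : ℝ} (hb : 0 < b) (hy : 0 ≤ y)
    (h : y ^ ((3 : ℝ) / 2) / b ≤ a) : y ^ 3 ≤ (a * b) ^ 2 := by
  rw [div_le_iff₀ hb] at h
  calc y ^ 3 = (y ^ ((3 : ℝ) / 2)) ^ 2 := by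
        rw [← Real.rpow_natCast, ← Real.rpow_natCast, ← Real.rpow_mul hy]; norm_num
    _ ≤ (a * b) ^ 2 := pow_le_pow_left₀ (by positivity) h 2

lemma mul_le_of_pow_three_le {k n m b : ℝ} (hk : 0 ≤ k) (hn : 0 ≤ n) (hb : 0 < b)
    (hkm : k ^ 3 * b ^ 2 ≤ 8 * m) (hnm : (2 * n) ^ 3 ≤ (m * b) ^ 2) : k * n ≤ m := by
  have hm : 0 ≤ m := by nlinarith [pow_nonneg hk 3, sq_nonneg b]
  have h : (k * n) ^ 3 * (8 * b ^ 2) ≤ m ^ 3 * (8 * b ^ 2) := by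
    calc (k * n) ^ 3 * (8 * b ^ 2) = (k ^ 3 * b ^ 2) * (2 * n) ^ 3 := by ring
      _ ≤ (8 * m) * (m * b) ^ 2 := mul_le_mul hkm hnm (by positivity) (by positivity)
      _ = m ^ 3 * (8 * b ^ 2) := by ring
  exact (pow_le_pow_iff_left₀ (by positivity) hm three_ne_zero).mp
    (le_of_mul_le_mul_right h (by positivity))

section Graph

open Matrix SimpleGraph

variable [Fintype V] (G : SimpleGraph V) [DecidableRel G.Adj]

lemma numEdges_eq : numEdges G = G.edgeFinset.card := by
  unfold numEdges; congr!

lemma sum_adjMatrix_apply (u : V) : ∑ v, G.adjMatrix ℝ u v = G.degree u := by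
  rw [G.degree_eq_sum_if_adj u]
  simp [adjMatrix_apply]

lemma sum_sum_adjMatrix : ∑ u, ∑ v, G.adjMatrix ℝ u v = 2 * numEdges G := by
  simp only [sum_adjMatrix_apply, numEdges_eq]
  exact_mod_cast G.sum_degrees_eq_twice_card_edges

lemma sum_sum_sq_adjMatrix : ∑ u, ∑ v, G.adjMatrix ℝ u v ^ 2 = 2 * numEdges G := by
  rw [← sum_sum_adjMatrix]
  congr! 2 with u _ v _
  by_cases h : G.Adj u v <;> simp [h]

lemma two_mul_numEdges_le :
    (2 * numEdges G : ℝ) ≤ Fintype.card V * (Fintype.card V - 1) := by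
  have h := G.card_edgeFinset_le_card_choose_two
  rw [← numEdges_eq] at h
  have h' : (numEdges G : ℝ) ≤ (Fintype.card V).choose 2 := by exact_mod_cast h
  rw [Nat.cast_choose_two] at h'
  linarith

variable [DecidableEq V]

lemma lapEig_eq : lapEig G = (lapMatrix_isHermitian G).eigenvalues := by
  unfold lapEig; congr!

lemma adjEig_eq : adjEig G = (adjMatrix_isHermitian G).eigenvalues := by
  unfold adjEig; congr!

lemma eigenvalues_le_specRad (j : V) :
    (adjMatrix_isHermitian G).eigenvalues j ≤ specRad G := by
  rw [specRad, ← adjEig_eq]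
  simpa using sum_le_sumKLargest (adjEig G) (Finset.card_singleton j)

lemma specRad_lt_card [Nonempty V] : specRad G < Fintype.card V := by
  have hn : (0 : ℝ) < Fintype.card V := by exact_mod_cast Fintype.card_pos
  have hsqrt : √(2 * numEdges G : ℝ) < Fintype.card V := by
    rw [Real.sqrt_lt' hn]
    nlinarith [two_mul_numEdges_le G]
  refine lt_of_le_of_lt (sumKLargest_le _ Fintype.card_pos fun T hT => ?_) hsqrt
  obtain ⟨j, rfl⟩ := Finset.card_eq_one.mp hT
  have h := (adjMatrix_isHermitian G).abs_eigenvalues_le j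
  rw [sum_sum_sq_adjMatrix] at h
  simpa [adjEig_eq] using (le_abs_self _).trans h

lemma dotProduct_mulVec_adjMatrix_le (x : V → ℝ) :
    x ⬝ᵥ (G.adjMatrix ℝ *ᵥ x) ≤ specRad G * (x ⬝ᵥ x) :=
  (adjMatrix_isHermitian G).dotProduct_mulVec_le (eigenvalues_le_specRad G) x

omit [Fintype V] in
lemma sum_sum_adjMatrix_le_specRad_induce (S : Finset V) :
    ∑ u ∈ S, ∑ v ∈ S, G.adjMatrix ℝ u v ≤ specRad (G.induce (S : Set V)) * S.card := by
  have h := dotProduct_mulVec_adjMatrix_le (G.induce (S : Set V)) fun _ => 1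
  simp only [dotProduct, mulVec, one_mul, mul_one] at h
  have hA : ∀ u v : (S : Set V), (G.induce (S : Set V)).adjMatrix ℝ u v = G.adjMatrix ℝ u v :=
    fun u v => by simp [adjMatrix_apply]
  simp only [hA] at h
  have hcard : Fintype.card (S : Set V) = S.card := by simp
  rw [Finset.sum_const, Finset.card_univ, nsmul_one, hcard] at h
  simpa only [Finset.sum_finset_coe (fun u => ∑ v ∈ S, G.adjMatrix ℝ u v),
    Finset.sum_finset_coe (G.adjMatrix ℝ _)] using h

omit [DecidableRel G.Adj] in
lemma finite_densities :
    { x : ℝ | ∃ S : Finset V, S.Nonempty ∧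
      x = specRad (G.induce (↑S : Set V)) / (S.card : ℝ) }.Finite :=
  (Set.finite_range fun S : Finset V => specRad (G.induce (↑S : Set V)) / (S.card : ℝ)).subset
    (by rintro x ⟨S, -, rfl⟩; exact ⟨S, rfl⟩)

omit [DecidableRel G.Adj] in
lemma specRad_induce_div_le_maxDensity {S : Finset V} (hS : S.Nonempty) :
    specRad (G.induce (S : Set V)) / S.card ≤ maxDensity G :=
  le_csSup (finite_densities G).bddAbove ⟨S, hS, rfl⟩

omit [DecidableRel G.Adj] in
lemma maxDensity_lt_one [Nonempty V] : maxDensity G < 1 := by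
  classical
  rw [maxDensity, (finite_densities G).csSup_lt_iff ⟨_, Finset.univ, Finset.univ_nonempty, rfl⟩]
  rintro x ⟨S, hS, rfl⟩
  have : Nonempty (S : Set V) := hS.to_subtype
  have hcard : Fintype.card (S : Set V) = S.card := by simp
  rw [div_lt_one (by exact_mod_cast hS.card_pos), ← hcard]
  exact specRad_lt_card _

lemma sum_degree_le (S : Finset V) :
    ∑ u ∈ S, (G.degree u : ℝ) ≤ numEdges G + (∑ u ∈ S, ∑ v ∈ S, G.adjMatrix ℝ u v) / 2 := by
  have hsymm :
      ∑ u ∈ Sᶜ, ∑ v ∈ S, G.adjMatrix ℝ u v = ∑ u ∈ S, ∑ v ∈ Sᶜ, G.adjMatrix ℝ u v := by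
    rw [Finset.sum_comm (f := fun u v => G.adjMatrix ℝ u v)]
    exact Finset.sum_congr rfl fun u _ => Finset.sum_congr rfl fun v _ => by
      simp only [adjMatrix_apply, G.adj_comm]
  have hrest : 0 ≤ ∑ u ∈ Sᶜ, ∑ v ∈ Sᶜ, G.adjMatrix ℝ u v :=
    Finset.sum_nonneg fun u _ => Finset.sum_nonneg fun v _ => by
      rw [adjMatrix_apply]; split_ifs <;> norm_num
  have hdeg : ∑ u ∈ S, (G.degree u : ℝ) =
      ∑ u ∈ S, ∑ v ∈ S, G.adjMatrix ℝ u v + ∑ u ∈ S, ∑ v ∈ Sᶜ, G.adjMatrix ℝ u v := by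
    simp only [← sum_adjMatrix_apply, ← Finset.sum_add_distrib, Finset.sum_add_sum_compl]
  have hedges := sum_sum_adjMatrix G
  simp only [← Finset.sum_add_sum_compl S, Finset.sum_add_distrib] at hedges
  linarith

lemma sum_degree_le_maxDensity {S : Finset V} (hS : S.Nonempty) :
    ∑ u ∈ S, (G.degree u : ℝ) ≤ numEdges G + maxDensity G * S.card ^ 2 / 2 := by
  have hs : (0 : ℝ) < S.card := by exact_mod_cast hS.card_pos
  have hρ : specRad (G.induce (S : Set V)) * S.card ≤ maxDensity G * S.card ^ 2 := by
    calc specRad (G.induce (S : Set V)) * S.card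
        = specRad (G.induce (S : Set V)) / S.card * S.card ^ 2 := by field_simp
      _ ≤ maxDensity G * S.card ^ 2 :=
        mul_le_mul_of_nonneg_right (specRad_induce_div_le_maxDensity G hS) (sq_nonneg _)
  linarith [sum_degree_le G S, sum_sum_adjMatrix_le_specRad_induce G S]

lemma dotProduct_mulVec_lapMatrix_le (x : V → ℝ) :
    x ⬝ᵥ (G.lapMatrix ℝ *ᵥ x) ≤ Fintype.card V * (x ⬝ᵥ x) := by
  rw [← toLinearMap₂'_apply', lapMatrix_toLinearMap₂']
  have hadj :
      ∑ i, ∑ j, (if G.Adj i j then (x i - x j) ^ 2 else 0) ≤ ∑ i, ∑ j, (x i - x j) ^ 2 :=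
    Finset.sum_le_sum fun i _ => Finset.sum_le_sum fun j _ => by
      split_ifs
      exacts [le_rfl, sq_nonneg _]
  have hall :
      ∑ i, ∑ j, (x i - x j) ^ 2 = 2 * Fintype.card V * (x ⬝ᵥ x) - 2 * (∑ i, x i) ^ 2 := by
    simp only [sub_sq, Finset.sum_add_distrib, Finset.sum_sub_distrib, ← Finset.mul_sum,
      ← Finset.sum_mul, Finset.sum_const, Finset.card_univ, nsmul_eq_mul, dotProduct, ← sq]
    ring
  nlinarith [sq_nonneg (∑ i, x i)]

lemma sum_dotProduct_lapMatrix_le {ι : Type*} [DecidableEq ι] {x : ι → V → ℝ} {T : Finset ι}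
    (hx : IsOrthonormalOn x T) (hT : T.Nonempty) :
    ∑ i ∈ T, x i ⬝ᵥ (G.lapMatrix ℝ *ᵥ x i) ≤
      numEdges G + maxDensity G * T.card ^ 2 / 2 + √(2 * numEdges G * T.card) := by
  have hsplit : ∑ i ∈ T, x i ⬝ᵥ (G.lapMatrix ℝ *ᵥ x i) =
      ∑ i ∈ T, x i ⬝ᵥ (G.degMatrix ℝ *ᵥ x i) - ∑ i ∈ T, x i ⬝ᵥ (G.adjMatrix ℝ *ᵥ x i) := by
    simp only [lapMatrix, sub_mulVec, dotProduct_sub, Finset.sum_sub_distrib]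
  have hdeg :
      ∑ i ∈ T, x i ⬝ᵥ (G.degMatrix ℝ *ᵥ x i) = ∑ u, G.degree u * projMatrix x T u u := by
    rw [sum_dotProduct_mulVec_eq_sum_mul_projMatrix]
    simp [degMatrix, diagonal_apply]
  obtain ⟨S, hS, hle⟩ := exists_card_eq_sum_mul_le (fun u => (G.degree u : ℝ)) _
    (projMatrix_apply_self_nonneg x T) (projMatrix_apply_self_le_one hx)
    (sum_projMatrix_apply_self hx)
  have hSdeg := sum_degree_le_maxDensity G (Finset.card_pos.mp (hS ▸ hT.card_pos))
  have hadj := abs_sum_dotProduct_mulVec_le hx (G.adjMatrix ℝ)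
  rw [sum_sum_sq_adjMatrix, mul_comm] at hadj
  rw [hS] at hSdeg
  linarith [neg_abs_le (∑ i ∈ T, x i ⬝ᵥ (G.adjMatrix ℝ *ᵥ x i))]

lemma sLap_le_of_forall_orthonormal {k : ℕ} (hk : k ≤ Fintype.card V) {B : ℝ}
    (h : ∀ (x : V → V → ℝ) (T : Finset V), IsOrthonormalOn x T → T.card = k →
      ∑ i ∈ T, x i ⬝ᵥ (G.lapMatrix ℝ *ᵥ x i) ≤ B) :
    sLap G k ≤ B := by
  rw [sLap, lapEig_eq]
  exact (lapMatrix_isHermitian G).sumKLargest_eigenvalues_le hk h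

lemma sLap_le_numEdges_add {k : ℕ} (hk1 : 1 ≤ k) (hk2 : k ≤ Fintype.card V) :
    sLap G k ≤ numEdges G + maxDensity G * k ^ 2 / 2 + √(2 * numEdges G * k) :=
  sLap_le_of_forall_orthonormal G hk2 fun _ T hx hT => by
    simpa only [hT] using sum_dotProduct_lapMatrix_le G hx (Finset.card_pos.mp (hT ▸ hk1))

lemma sLap_le_mul_card {k : ℕ} (hk : k ≤ Fintype.card V) : sLap G k ≤ k * Fintype.card V :=
  sLap_le_of_forall_orthonormal G hk fun x T hx hT => by
    calc ∑ i ∈ T, x i ⬝ᵥ (G.lapMatrix ℝ *ᵥ x i) ≤ ∑ i ∈ T, (Fintype.card V : ℝ) := by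
          refine Finset.sum_le_sum fun i hi => ?_
          simpa [hx i hi i hi] using dotProduct_mulVec_lapMatrix_le G (x i)
      _ = k * Fintype.card V := by rw [Finset.sum_const, hT, nsmul_eq_mul]

lemma bc_of_eight_mul_numEdges_le {k : ℕ} (hk1 : 1 ≤ k) (hk2 : k ≤ Fintype.card V)
    (h : 8 * (numEdges G : ℝ) ≤ k ^ 3 * (1 - maxDensity G) ^ 2) : BC G k := by
  have : Nonempty V := Fintype.card_pos_iff.mp (hk1.trans hk2)
  have ht := maxDensity_lt_one G
  have hk : (1 : ℝ) ≤ k := by exact_mod_cast hk1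
  have hsqrt : √(2 * numEdges G * k) ≤ (1 - maxDensity G) * k ^ 2 / 2 := by
    rw [Real.sqrt_le_left (by nlinarith)]
    nlinarith
  rw [BC, Nat.cast_choose_two]
  push_cast
  nlinarith [sLap_le_numEdges_add G hk1 hk2]

lemma bc_of_mul_card_le {k : ℕ} (hk : k ≤ Fintype.card V)
    (h : (k * Fintype.card V : ℝ) ≤ numEdges G) : BC G k := by
  have := sLap_le_mul_card G hk
  rw [BC]
  linarith [(Nat.cast_nonneg _ : (0 : ℝ) ≤ (k + 1).choose 2)]

end Graph

/-- `BC_k(G)` holds if `k ≥ 2 m^{1/3}/(1-t)^{2/3}` or `m ≥ (2n)^{3/2}/(1-t)`,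
where `t = t(G)` is the maximum subgraph spectral density. -/
theorem bc_of_maxDensity {V : Type*} [Fintype V] [DecidableEq V] (G : SimpleGraph V)
    (k : ℕ) (hk1 : 1 ≤ k) (hk2 : k ≤ Fintype.card V)
    (h : 2 * (numEdges G : ℝ) ^ ((1 : ℝ) / 3) / (1 - maxDensity G) ^ ((2 : ℝ) / 3) ≤ (k : ℝ)
      ∨ (2 * (Fintype.card V : ℝ)) ^ ((3 : ℝ) / 2) / (1 - maxDensity G) ≤ (numEdges G : ℝ)) :
    BC G k := by
  classical
  have : Nonempty V := Fintype.card_pos_iff.mp (hk1.trans hk2)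
  have hb : 0 < 1 - maxDensity G := sub_pos.mpr (maxDensity_lt_one G)
  rcases le_or_gt (8 * (numEdges G : ℝ)) (k ^ 3 * (1 - maxDensity G) ^ 2) with hcube | hcube
  · exact bc_of_eight_mul_numEdges_le G hk1 hk2 hcube
  · have hm := h.resolve_left fun h1 => hcube.not_ge <|
      (two_mul_rpow_div_rpow_le_iff (Nat.cast_nonneg _) hb (Nat.cast_nonneg _)).mp h1
    exact bc_of_mul_card_le G hk2 <| mul_le_of_pow_three_le (Nat.cast_nonneg _) (Nat.cast_nonneg _)
      hb hcube.le (pow_three_le_of_rpow_div_le hb (by positivity) hm)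

end Brouwer
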